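/- Let Γ be a finite set of ground term equations and N the maximum height of a term occurring in Γ. Define the finite partial algebra B whose elements are the ∼_Γ-congruence classes containing a term of height at most N, with partial operations induced from F_Γ (f applied to classes in B is defined iff the resulting class is again in B). Then F_Γ is isomorphic to the free extension F(B). -/

import Mathlib

namespace AFA

open Classical

/-- A functional signature: operation symbols with arities. Constants are arity-0 symbols. -/
structure Sig where
  Op : Type
  arity : Op → ℕ

/-- Ground terms over a signature. -/
inductive Tm (S : Sig) : Type
  | node (f : S.Op) (args : Fin (S.arity f) → Tm S) : Tm S

/-- The ground term given by a constant symbol. -/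
def constTm (S : Sig) (c : S.Op) (h : S.arity c = 0) : Tm S :=
  Tm.node c (fun i => absurd i.isLt (by omega))

/-- Height of a ground term (constants have height 0). -/
def Tm.height {S : Sig} : Tm S → ℕ
  | Tm.node _ a => Finset.univ.sup fun i => (a i).height + 1

/-- The i-th immediate subterm (child of the root of the syntax tree), if it exists. -/
def Tm.child {S : Sig} : Tm S → ℕ → Option (Tm S)
  | Tm.node f a, i => if h : i < S.arity f then some (a ⟨i, h⟩) else none

/-- A total algebra over the signature `S`. -/
structure Alg (S : Sig) where
  carrier : Type
  op : (f : S.Op) → (Fin (S.arity f) → carrier) → carrier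

/-- Homomorphism of total algebras. -/
structure Hom {S : Sig} (A B : Alg S) where
  toFun : A.carrier → B.carrier
  map : ∀ (f : S.Op) (a : Fin (S.arity f) → A.carrier),
    toFun (A.op f a) = B.op f (fun i => toFun (a i))

/-- Evaluation of a ground term in an algebra. -/
def Tm.eval {S : Sig} (A : Alg S) : Tm S → A.carrier
  | Tm.node f a => A.op f (fun i => (a i).eval A)

/-- An algebra is generated by the constants iff every element is the value of a ground term. -/
def GeneratedAlg {S : Sig} (A : Alg S) : Prop :=
  ∀ x : A.carrier, ∃ t : Tm S, t.eval A = x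

/-- Isomorphism of total algebras. -/
def AlgIso {S : Sig} (A B : Alg S) : Prop :=
  ∃ h : Hom A B, Function.Bijective h.toFun

/-- Derivability in equational logic from a set `Γ` of ground equations:
the smallest congruence containing `Γ`. `Thm Γ p q` means `Γ ⊢ p = q`. -/
inductive Thm {S : Sig} (Γ : Set (Tm S × Tm S)) : Tm S → Tm S → Prop
  | ax {p q : Tm S} : (p, q) ∈ Γ → Thm Γ p q
  | refl (t : Tm S) : Thm Γ t t
  | symm {p q : Tm S} : Thm Γ p q → Thm Γ q p
  | trans {p q r : Tm S} : Thm Γ p q → Thm Γ q r → Thm Γ p r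
  | congr {f : S.Op} {a b : Fin (S.arity f) → Tm S} :
      (∀ i, Thm Γ (a i) (b i)) → Thm Γ (Tm.node f a) (Tm.node f b)

/-- The setoid `∼_Γ` on ground terms. -/
def thmSetoid {S : Sig} (Γ : Set (Tm S × Tm S)) : Setoid (Tm S) :=
  ⟨Thm Γ, ⟨fun t => Thm.refl t, fun h => Thm.symm h, fun h₁ h₂ => Thm.trans h₁ h₂⟩⟩

/-- The quotient algebra `F_Γ = F/∼_Γ`. -/
noncomputable def FGamma {S : Sig} (Γ : Set (Tm S × Tm S)) : Alg S where
  carrier := Quotient (thmSetoid Γ)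
  op f a := Quotient.mk (thmSetoid Γ) (Tm.node f (fun i => (a i).out))

/-- Single-step ground rewriting: replace a subterm which is one side of an
equation of `Γ` by the other side. -/
inductive Step {S : Sig} (Γ : Set (Tm S × Tm S)) : Tm S → Tm S → Prop
  | here {p q : Tm S} : (p, q) ∈ Γ ∨ (q, p) ∈ Γ → Step Γ p q
  | sub {f : S.Op} {a b : Fin (S.arity f) → Tm S} (i : Fin (S.arity f)) :
      Step Γ (a i) (b i) → (∀ j, j ≠ i → a j = b j) → Step Γ (Tm.node f a) (Tm.node f b)

/-- Subterm relation on ground terms. -/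
inductive Subterm {S : Sig} : Tm S → Tm S → Prop
  | refl (t : Tm S) : Subterm t t
  | step {s : Tm S} {f : S.Op} {a : Fin (S.arity f) → Tm S} (i : Fin (S.arity f)) :
      Subterm s (a i) → Subterm s (Tm.node f a)

/-- `p` occurs in `Γ` (is one side of an equation of `Γ`). -/
def SideOf {S : Sig} (Γ : Set (Tm S × Tm S)) (p : Tm S) : Prop :=
  ∃ e ∈ Γ, p = e.1 ∨ p = e.2

/-- `ST Γ`: all subterms of terms occurring in `Γ`. -/
def ST {S : Sig} (Γ : Set (Tm S × Tm S)) : Set (Tm S) :=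
  {t | ∃ e ∈ Γ, Subterm t e.1 ∨ Subterm t e.2}

/-- A term "has a type" if it is `∼_Γ`-equivalent to a term mentioned in `Γ`. -/
def HasType {S : Sig} (Γ : Set (Tm S × Tm S)) (t : Tm S) : Prop :=
  ∃ p, SideOf Γ p ∧ Thm Γ t p

/-- `w` is an immediate subterm of `u`. -/
def ImmSub {S : Sig} (w u : Tm S) : Prop :=
  ∃ (f : S.Op) (a : Fin (S.arity f) → Tm S) (i : Fin (S.arity f)), u = Tm.node f a ∧ a i = w

/-- Edge relation of the quotient graph `R̂_Γ`: there is a directed edge from the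
class of `u` to the class of `w` iff some `Γ`-subterm-occurrence `u'` equivalent to `u`
has an immediate subterm `w'` equivalent to `w`. -/
def EdgeHat {S : Sig} (Γ : Set (Tm S × Tm S)) (u w : Tm S) : Prop :=
  ∃ u' w', u' ∈ ST Γ ∧ w' ∈ ST Γ ∧ Thm Γ u u' ∧ Thm Γ w w' ∧ ImmSub w' u'

/-- A directed cycle of `R̂_Γ` is reachable from (the class of) `t` by a directed path. -/
def CyclicFrom {S : Sig} (Γ : Set (Tm S × Tm S)) (t : Tm S) : Prop :=
  ∃ u, Relation.ReflTransGen (EdgeHat Γ) t u ∧ Relation.TransGen (EdgeHat Γ) u u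

/-- `t` is of cyclic type: `t` is `∼_Γ`-equivalent to a term mentioned in `Γ`
whose type is cyclic. -/
def OfCyclicType {S : Sig} (Γ : Set (Tm S × Tm S)) (t : Tm S) : Prop :=
  ∃ p, SideOf Γ p ∧ Thm Γ t p ∧ CyclicFrom Γ p

/-- The canonical representative map: given a choice function `r` assigning to each
typed term the fixed representative of its type, replace each maximal typed subterm
of `t` by the chosen representative. -/
noncomputable def repMap {S : Sig} (Γ : Set (Tm S × Tm S)) (r : Tm S → Tm S) : Tm S → Tm S
  | Tm.node f a =>
      if HasType Γ (Tm.node f a) then r (Tm.node f a)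
      else Tm.node f fun i => repMap Γ r (a i)

/-- A partial algebra over `S`. -/
structure PAlg (S : Sig) where
  carrier : Type
  pop : (f : S.Op) → (Fin (S.arity f) → carrier) → Option carrier

/-- An embedding exhibiting the partial algebra `B` as a substructure of the
total algebra `A`. -/
structure PEmb {S : Sig} (B : PAlg S) (A : Alg S) where
  toFun : B.carrier → A.carrier
  inj : Function.Injective toFun
  map : ∀ (f : S.Op) (b : Fin (S.arity f) → B.carrier) (c : B.carrier),
    B.pop f b = some c → A.op f (fun i => toFun (b i)) = toFun c

/-- `A` is free over the partial algebra `B` (via the substructure embedding `e`):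
every (constant-generated) algebra containing `B` as a substructure is a homomorphic
image of `A` via a homomorphism fixing `B` pointwise. -/
def IsFreeOver {S : Sig} (A : Alg S) (B : PAlg S) (e : PEmb B A) : Prop :=
  ∀ (C : Alg S), GeneratedAlg C → ∀ e' : PEmb B C,
    ∃ h : Hom A C, Function.Surjective h.toFun ∧ ∀ b, h.toFun (e.toFun b) = e'.toFun b

/-- Elements of a partial algebra generated from constants via the defined operations. -/
inductive PGen {S : Sig} (B : PAlg S) : B.carrier → Prop
  | op {f : S.Op} {b : Fin (S.arity f) → B.carrier} {c : B.carrier} :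
      (∀ i, PGen B (b i)) → B.pop f b = some c → PGen B c

/-- A partial algebra is generated by the constants. -/
def PGenerated {S : Sig} (B : PAlg S) : Prop := ∀ x, PGen B x

/-- Raw `B`-terms: terms built over elements of the partial algebra `B`. -/
inductive BTm {S : Sig} (B : PAlg S) : Type
  | base (b : B.carrier) : BTm B
  | app (f : S.Op) (args : Fin (S.arity f) → BTm B) : BTm B

/-- Normal `B`-terms: an application node is allowed only when it cannot be
evaluated in `B`. -/
inductive Normal {S : Sig} {B : PAlg S} : BTm B → Prop
  | base (b : B.carrier) : Normal (BTm.base b)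
  | app {f : S.Op} {args : Fin (S.arity f) → BTm B} :
      (∀ i, Normal (args i)) →
      ¬(∃ (b : Fin (S.arity f) → B.carrier) (c : B.carrier),
          (∀ i, args i = BTm.base (b i)) ∧ B.pop f b = some c) →
      Normal (BTm.app f args)

/-- The free total extension `F(B)` of the partial algebra `B`: its elements are
the normal `B`-terms; an operation evaluates in `B` whenever possible, and forms
a formal term otherwise. -/
noncomputable def FB {S : Sig} (B : PAlg S) : Alg S where
  carrier := {t : BTm B // Normal t}
  op f args :=
    if h : ∃ (b : Fin (S.arity f) → B.carrier) (c : B.carrier),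
        (∀ i, (args i).1 = BTm.base (b i)) ∧ B.pop f b = some c
    then ⟨BTm.base h.choose_spec.choose, Normal.base _⟩
    else ⟨BTm.app f (fun i => (args i).1), Normal.app (fun i => (args i).2) h⟩

/-- The canonical inclusion of `B` into `F(B)`. -/
def embB {S : Sig} (B : PAlg S) (b : B.carrier) : (FB B).carrier :=
  ⟨BTm.base b, Normal.base b⟩

/-- Terms with variables. -/
inductive TmV (S : Sig) : Type
  | var (n : ℕ) : TmV S
  | node (f : S.Op) (args : Fin (S.arity f) → TmV S) : TmV S

/-- Ground substitution into a term with variables. -/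
def TmV.substG {S : Sig} (ρ : ℕ → Tm S) : TmV S → Tm S
  | TmV.var n => ρ n
  | TmV.node f a => Tm.node f (fun i => (a i).substG ρ)

/-- Evaluation of a term with variables under an assignment. -/
def TmV.evalV {S : Sig} (A : Alg S) (ρ : ℕ → A.carrier) : TmV S → A.carrier
  | TmV.var n => ρ n
  | TmV.node f a => A.op f (fun i => (a i).evalV A ρ)

/-- All ground instances of a set of (possibly non-ground) equations. -/
def GroundInstances {S : Sig} (Γ : Set (TmV S × TmV S)) : Set (Tm S × Tm S) :=
  {pq | ∃ e ∈ Γ, ∃ ρ : ℕ → Tm S, pq.1 = e.1.substG ρ ∧ pq.2 = e.2.substG ρ}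

/-- `A ⊨ Γ` for a set of (possibly non-ground) equations. -/
def SatV {S : Sig} (A : Alg S) (Γ : Set (TmV S × TmV S)) : Prop :=
  ∀ e ∈ Γ, ∀ ρ : ℕ → A.carrier, TmV.evalV A ρ e.1 = TmV.evalV A ρ e.2

/-- The finite partial algebra of `∼_Γ`-classes containing a term of height `≤ N`. -/
noncomputable def heightPAlg {S : Sig} (Γ : Set (Tm S × Tm S)) (N : ℕ) : PAlg S where
  carrier := {x : Quotient (thmSetoid Γ) //
    ∃ t : Tm S, t.height ≤ N ∧ Quotient.mk (thmSetoid Γ) t = x}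
  pop f b :=
    if h : ∃ t : Tm S, t.height ≤ N ∧
        Quotient.mk (thmSetoid Γ) t =
          Quotient.mk (thmSetoid Γ) (Tm.node f (fun i => (b i).1.out))
    then some ⟨Quotient.mk (thmSetoid Γ) (Tm.node f (fun i => (b i).1.out)), h⟩
    else none

/-- The set `B = C ∪ ST(Γ₁ ∪ Γ₂)`. -/
def BSet {S : Sig} (Γ₁ Γ₂ : Set (Tm S × Tm S)) : Set (Tm S) :=
  {t | (∃ (c : S.Op) (h : S.arity c = 0), t = constTm S c h) ∨ t ∈ ST (Γ₁ ∪ Γ₂)}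

/-- The partial algebra induced by `Γ` on the `∼_Γ`-classes of terms of `Bs`:
`f` applied to classes is defined iff the class of the resulting term again
contains a term of `Bs`. -/
noncomputable def BAlg {S : Sig} (Γ : Set (Tm S × Tm S)) (Bs : Set (Tm S)) : PAlg S where
  carrier := Quotient (Setoid.comap (Subtype.val : Bs → Tm S) (thmSetoid Γ))
  pop f b :=
    if h : ∃ u : Bs, Thm Γ u.1 (Tm.node f (fun i => ((b i).out).1))
    then some (Quotient.mk (Setoid.comap (Subtype.val : Bs → Tm S) (thmSetoid Γ)) h.choose)
    else none

/-- The class of `t ∈ Bs` as an element of `BAlg Γ Bs`. -/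
noncomputable def BAlgMk {S : Sig} (Γ : Set (Tm S × Tm S)) (Bs : Set (Tm S))
    (t : Tm S) (ht : t ∈ Bs) : (BAlg Γ Bs).carrier :=
  Quotient.mk (Setoid.comap (Subtype.val : Bs → Tm S) (thmSetoid Γ)) ⟨t, ht⟩

/-- Isomorphism of partial algebras: a bijection preserving definedness and
values of the partial operations in both directions. -/
def PIso {S : Sig} (B₁ B₂ : PAlg S) : Prop :=
  ∃ e : B₁.carrier ≃ B₂.carrier,
    ∀ (f : S.Op) (b : Fin (S.arity f) → B₁.carrier),
      Option.map e (B₁.pop f b) = B₂.pop f (fun i => e (b i))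

/-- The algebra structure on `∼_Γ`-classes of `ST(Γ)`, defined via the closure
hypothesis `hf`. -/
noncomputable def STAlg {S : Sig} (Γ : Set (Tm S × Tm S))
    (hf : ∀ (f : S.Op) (a : Fin (S.arity f) → Tm S), (∀ i, a i ∈ ST Γ) →
      ∃ u ∈ ST Γ, Thm Γ (Tm.node f a) u) : Alg S where
  carrier := Quotient (Setoid.comap (Subtype.val : ST Γ → Tm S) (thmSetoid Γ))
  op f a :=
    let h := hf f (fun i => ((a i).out).1) (fun i => ((a i).out).2)
    Quotient.mk (Setoid.comap (Subtype.val : ST Γ → Tm S) (thmSetoid Γ))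
      ⟨h.choose, h.choose_spec.1⟩

/-- The map `φ : F → ST(Γ)` defined inductively by choosing, at each application,
a `∼_Γ`-equivalent member of `ST(Γ)`. -/
noncomputable def phiST {S : Sig} (Γ : Set (Tm S × Tm S))
    (hf : ∀ (f : S.Op) (a : Fin (S.arity f) → Tm S), (∀ i, a i ∈ ST Γ) →
      ∃ u ∈ ST Γ, Thm Γ (Tm.node f a) u) : Tm S → {u : Tm S // u ∈ ST Γ}
  | Tm.node f a =>
      let ih := fun i => phiST Γ hf (a i)
      let h := hf f (fun i => (ih i).1) (fun i => (ih i).2)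
      ⟨h.choose, h.choose_spec.1⟩

/-- The tester predicate `Is_f` on `F(B)`: holds of `a` iff `a ∉ B` and `a` is a
formal term with head symbol `f`. -/
def IsTester {S : Sig} {B : PAlg S} (f : S.Op) (a : (FB B).carrier) : Prop :=
  ∃ args : Fin (S.arity f) → BTm B, a.1 = BTm.app f args

/-! Every equation of `Γ` relates two terms of height `≤ N`, and such terms evaluate in `F(B)`
to the element of `B` given by their class, so `F(B)` satisfies `Γ` and evaluation of ground
terms induces a homomorphism `F_Γ → F(B)`. It is onto because `F(B)` is generated by the
constants (every element of `B` is the class of a term). Conversely, the inclusion of `B`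
into `F_Γ` respects the partial operations, so it extends to a homomorphism `F(B) → F_Γ`;
since `F_Γ` is generated by the constants, the composite `F_Γ → F(B) → F_Γ` is the identity. -/

variable {S : Sig}

lemma Tm.height_lt_node {f : S.Op} (a : Fin (S.arity f) → Tm S) (i : Fin (S.arity f)) :
    (a i).height < (Tm.node f a).height :=
  Finset.le_sup (f := fun i => (a i).height + 1) (Finset.mem_univ i)

lemma Thm.mk_out {Γ : Set (Tm S × Tm S)} (t : Tm S) :
    Thm Γ (Quotient.mk (thmSetoid Γ) t).out t :=
  Quotient.mk_out (s := thmSetoid Γ) t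

lemma Tm.eval_eq_of_thm {Γ : Set (Tm S × Tm S)} {A : Alg S}
    (hA : ∀ e ∈ Γ, e.1.eval A = e.2.eval A) {p q : Tm S} (h : Thm Γ p q) :
    p.eval A = q.eval A := by
  induction h with
  | ax hpq => exact hA _ hpq
  | refl => rfl
  | symm _ ih => exact ih.symm
  | trans _ _ ih₁ ih₂ => exact ih₁.trans ih₂
  | congr _ ih => exact congrArg (A.op _) (funext ih)

namespace Hom

variable {A C : Alg S}

lemma map_eval (h : Hom A C) (t : Tm S) : h.toFun (t.eval A) = t.eval C := by
  induction t with
  | node f a ih => exact (h.map f _).trans (congrArg (C.op f) (funext ih))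

lemma surjective_of_generatedAlg (h : Hom A C) (hC : GeneratedAlg C) :
    Function.Surjective h.toFun := fun x => by
  obtain ⟨t, rfl⟩ := hC x
  exact ⟨t.eval A, h.map_eval t⟩

lemma leftInverse_of_generatedAlg (φ : Hom A C) (ψ : Hom C A) (hA : GeneratedAlg A) :
    Function.LeftInverse ψ.toFun φ.toFun := fun x => by
  obtain ⟨t, rfl⟩ := hA x
  rw [φ.map_eval, ψ.map_eval]

end Hom

namespace FGamma

variable {Γ : Set (Tm S × Tm S)}

lemma eval_eq_mk (t : Tm S) : t.eval (FGamma Γ) = Quotient.mk (thmSetoid Γ) t := by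
  induction t with
  | node f a ih =>
    show Quotient.mk _ (Tm.node f fun i => ((a i).eval (FGamma Γ)).out) = _
    simp only [ih]
    exact Quotient.sound (Thm.congr fun i => Thm.mk_out (a i))

lemma generatedAlg : GeneratedAlg (FGamma Γ) :=
  Quotient.ind fun t => ⟨t, eval_eq_mk t⟩

noncomputable def lift {A : Alg S} (hA : ∀ e ∈ Γ, e.1.eval A = e.2.eval A) :
    Hom (FGamma Γ) A where
  toFun := Quotient.lift (Tm.eval A) fun _ _ => Tm.eval_eq_of_thm hA
  map f a := congrArg (A.op f) <| funext fun i => by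
    conv_rhs => rw [← Quotient.out_eq (a i)]
    rfl

end FGamma

namespace FB

variable {B : PAlg S}

lemma op_of_pop_eq_some {f : S.Op} {args : Fin (S.arity f) → (FB B).carrier}
    {b : Fin (S.arity f) → B.carrier} {c : B.carrier}
    (hargs : ∀ i, (args i).1 = BTm.base (b i)) (hc : B.pop f b = some c) :
    (FB B).op f args = embB B c := by
  have h : ∃ (b' : Fin (S.arity f) → B.carrier) (c' : B.carrier),
      (∀ i, (args i).1 = BTm.base (b' i)) ∧ B.pop f b' = some c' := ⟨b, c, hargs, hc⟩
  have unique : ∀ (b' : Fin (S.arity f) → B.carrier) (c' : B.carrier),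
      (∀ i, (args i).1 = BTm.base (b' i)) → B.pop f b' = some c' → c' = c := by
    intro b' c' hb' hc'
    obtain rfl : b' = b := funext fun i => BTm.base.inj ((hb' i).symm.trans (hargs i))
    exact Option.some.inj (hc'.symm.trans hc)
  dsimp only [FB]
  rw [dif_pos h]
  exact Subtype.ext (congrArg BTm.base
    (unique _ _ h.choose_spec.choose_spec.1 h.choose_spec.choose_spec.2))

lemma op_of_not_defined {f : S.Op} {args : Fin (S.arity f) → (FB B).carrier}
    (h : ¬∃ (b : Fin (S.arity f) → B.carrier) (c : B.carrier),
      (∀ i, (args i).1 = BTm.base (b i)) ∧ B.pop f b = some c) :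
    (FB B).op f args = ⟨BTm.app f fun i => (args i).1, Normal.app (fun i => (args i).2) h⟩ :=
  dif_neg h

def interp {A : Alg S} (ι : B.carrier → A.carrier) : BTm B → A.carrier
  | .base b => ι b
  | .app f args => A.op f fun i => interp ι (args i)

noncomputable def liftHom {A : Alg S} (ι : B.carrier → A.carrier)
    (hι : ∀ f b c, B.pop f b = some c → A.op f (fun i => ι (b i)) = ι c) :
    Hom (FB B) A where
  toFun x := interp ι x.1
  map f args := by
    by_cases h : ∃ (b : Fin (S.arity f) → B.carrier) (c : B.carrier),
        (∀ i, (args i).1 = BTm.base (b i)) ∧ B.pop f b = some c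
    · obtain ⟨b, c, hargs, hc⟩ := h
      rw [op_of_pop_eq_some hargs hc]
      simp only [hargs, interp]
      exact (hι f b c hc).symm
    · rw [op_of_not_defined h]
      rfl

lemma generatedAlg_of_forall_embB (hB : ∀ b, ∃ t : Tm S, t.eval (FB B) = embB B b) :
    GeneratedAlg (FB B) := by
  rintro ⟨n, hn⟩
  induction hn with
  | base b => exact hB b
  | @app f args hargs hnot ih =>
    choose s hs using ih
    refine ⟨Tm.node f s, ?_⟩
    show (FB B).op f (fun i => (s i).eval (FB B)) = _
    rw [show (fun i => (s i).eval (FB B)) = fun i => ⟨args i, hargs i⟩ from funext hs]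
    exact op_of_not_defined hnot

end FB

namespace heightPAlg

variable {Γ : Set (Tm S × Tm S)} {N : ℕ}

lemma pop_eq_some {f : S.Op} {a : Fin (S.arity f) → Tm S} (ha : (Tm.node f a).height ≤ N)
    {b : Fin (S.arity f) → (heightPAlg Γ N).carrier}
    (hb : ∀ i, (b i).1 = Quotient.mk _ (a i)) :
    (heightPAlg Γ N).pop f b = some ⟨Quotient.mk _ (Tm.node f a), Tm.node f a, ha, rfl⟩ := by
  have hnode : Quotient.mk (thmSetoid Γ) (Tm.node f fun i => (b i).1.out)
      = Quotient.mk _ (Tm.node f a) :=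
    Quotient.sound (Thm.congr fun i => Quotient.exact ((Quotient.out_eq _).trans (hb i)))
  have h : ∃ t : Tm S, t.height ≤ N ∧ Quotient.mk (thmSetoid Γ) t =
      Quotient.mk (thmSetoid Γ) (Tm.node f fun i => (b i).1.out) :=
    ⟨Tm.node f a, ha, hnode.symm⟩
  exact (dif_pos h).trans (congrArg some (Subtype.ext hnode))

lemma val_of_pop_eq_some {f : S.Op} {b : Fin (S.arity f) → (heightPAlg Γ N).carrier}
    {c : (heightPAlg Γ N).carrier} (hc : (heightPAlg Γ N).pop f b = some c) :
    (FGamma Γ).op f (fun i => (b i).1) = c.1 := by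
  dsimp only [heightPAlg] at hc
  split at hc
  case isFalse => cases hc
  exact congrArg Subtype.val (Option.some.inj hc)

lemma eval_of_height_le {t : Tm S} (ht : t.height ≤ N) :
    t.eval (FB (heightPAlg Γ N)) = embB (heightPAlg Γ N) ⟨Quotient.mk _ t, t, ht, rfl⟩ := by
  induction t with
  | node f a ih =>
    have hchild i : (a i).height ≤ N := (Tm.height_lt_node a i).le.trans ht
    exact FB.op_of_pop_eq_some (fun i => congrArg Subtype.val (ih i (hchild i)))
      (pop_eq_some ht fun _ => rfl)

lemma generatedAlg_FB : GeneratedAlg (FB (heightPAlg Γ N)) :=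
  FB.generatedAlg_of_forall_embB fun b => by
    obtain ⟨_, t, ht, rfl⟩ := b
    exact ⟨t, eval_of_height_le ht⟩

lemma FB_satisfies (hΓ : ∀ e ∈ Γ, e.1.height ≤ N ∧ e.2.height ≤ N) :
    ∀ e ∈ Γ, e.1.eval (FB (heightPAlg Γ N)) = e.2.eval (FB (heightPAlg Γ N)) := by
  intro e he
  rw [eval_of_height_le (hΓ e he).1, eval_of_height_le (hΓ e he).2]
  exact congrArg _ (Subtype.ext (Quotient.sound (Thm.ax he)))

end heightPAlg

theorem stmt6_general (S : Sig) (Γ : Finset (Tm S × Tm S)) (N : ℕ)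
    (hN : N = Γ.sup fun e => max e.1.height e.2.height) :
    AlgIso (FGamma (↑Γ : Set (Tm S × Tm S))) (FB (heightPAlg (↑Γ : Set (Tm S × Tm S)) N)) := by
  have hΓ : ∀ e ∈ (↑Γ : Set (Tm S × Tm S)), e.1.height ≤ N ∧ e.2.height ≤ N := fun e he =>
    max_le_iff.mp (hN ▸ Finset.le_sup (f := fun e => max e.1.height e.2.height) he)
  let φ := FGamma.lift (heightPAlg.FB_satisfies hΓ)
  let ψ := FB.liftHom (A := FGamma (↑Γ : Set (Tm S × Tm S))) (B := heightPAlg _ N) Subtype.val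
    fun _ _ _ => heightPAlg.val_of_pop_eq_some
  exact ⟨φ, (φ.leftInverse_of_generatedAlg ψ FGamma.generatedAlg).injective,
    φ.surjective_of_generatedAlg heightPAlg.generatedAlg_FB⟩

/-- Let `N` be the maximum height of a term occurring in `Γ` and `B` the
finite partial algebra of `∼_Γ`-classes containing a term of height at most `N`, with
partial operations induced from `F_Γ`. Then `F_Γ ≅ F(B)`. -/
theorem stmt6 (S : Sig) [Fintype S.Op] (Γ : Finset (Tm S × Tm S)) (N : ℕ)
    (hN : N = Γ.sup fun e => max e.1.height e.2.height) :
    AlgIso (FGamma (↑Γ : Set (Tm S × Tm S))) (FB (heightPAlg (↑Γ : Set (Tm S × Tm S)) N)) :=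
  stmt6_general S Γ N hN

end AFA
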